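/- arXiv:1312.0330 — 4 statements merged into one kernel-verified Lean document; each statement's English description precedes it below -/
import Mathlib

section
/- Let N ≥ 2 be an integer and q = exp(πi/N). For every integer s with 1 ≤ s ≤ N−1, ∑_{l=1}^{s−1} 1/([l]·[s−l]) = [s]⁻¹ · ∑_{l=1}^{s−1} {l}_+/[l]. -/
open Complex Finset

/-- `q = exp(π i / N)`. -/
noncomputable def qq (N : ℕ) : ℂ := Complex.exp (Real.pi * Complex.I / N)

/-- The quantum integer `[k] = (q^k - q^{-k}) / (q - q^{-1})`. -/
noncomputable def qint (N : ℕ) (k : ℤ) : ℂ :=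
  (qq N ^ k - qq N ^ (-k)) / (qq N - (qq N)⁻¹)

/-!
The addition formula `{a}_+ {b} + {a} {b}_+ = 2 {a + b}` says that
`1 / ([a] [b]) = [a + b]⁻¹ ({a}_+/[a] + {b}_+/[b]) / 2`. Summing over `a + b = s` and reflecting
`l ↦ s - l` in the second half gives the identity.
-/

theorem Finset.sum_Icc_reflect {M : Type*} [AddCommMonoid M] (f : ℤ → M) {a b c : ℤ}
    (h : a + b = c) : ∑ l ∈ Icc a b, f (c - l) = ∑ l ∈ Icc a b, f l :=
  sum_nbij' (fun l ↦ c - l) (fun l ↦ c - l)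
    (fun l hl ↦ by simp only [mem_Icc] at hl ⊢; omega)
    (fun l hl ↦ by simp only [mem_Icc] at hl ⊢; omega)
    (fun l _ ↦ by ring) (fun l _ ↦ by ring) (fun l _ ↦ rfl)

theorem add_inv_mul_sub_inv_add_sub_inv_mul_add_inv {K : Type*} [Field K] {x y : K} (hx : x ≠ 0)
    (hy : y ≠ 0) :
    (x + x⁻¹) * (y - y⁻¹) + (x - x⁻¹) * (y + y⁻¹) = 2 * (x * y - (x * y)⁻¹) := by
  field_simp
  ring

theorem two_div_sub_inv_mul_sub_inv {K : Type*} [Field K] {x y : K} (hx : x - x⁻¹ ≠ 0)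
    (hy : y - y⁻¹ ≠ 0) (hxy : x * y - (x * y)⁻¹ ≠ 0) :
    2 / ((x - x⁻¹) * (y - y⁻¹)) =
      (x * y - (x * y)⁻¹)⁻¹ * ((x + x⁻¹) / (x - x⁻¹) + (y + y⁻¹) / (y - y⁻¹)) := by
  have hx0 : x ≠ 0 := by rintro rfl; simp at hx
  have hy0 : y ≠ 0 := by rintro rfl; simp at hy
  rw [div_add_div _ _ hx hy, add_inv_mul_sub_inv_add_sub_inv_mul_add_inv hx0 hy0,
    mul_comm 2, mul_div_assoc, inv_mul_cancel_left₀ hxy]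

theorem qq_sq_isPrimitiveRoot {N : ℕ} (hN : N ≠ 0) : IsPrimitiveRoot (qq N ^ 2) N := by
  convert Complex.isPrimitiveRoot_exp N hN using 1
  rw [qq, ← Complex.exp_nat_mul]
  ring_nf

theorem qq_zpow_sub_zpow_neg_ne_zero {N : ℕ} (hN : N ≠ 0) {k : ℤ} (hk : ¬ (N : ℤ) ∣ k) :
    qq N ^ k - qq N ^ (-k) ≠ 0 := by
  have hq : qq N ≠ 0 := Complex.exp_ne_zero _
  intro h
  refine hk ((qq_sq_isPrimitiveRoot hN).zpow_eq_one_iff_dvd k |>.mp ?_)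
  rw [zpow_neg, sub_eq_zero] at h
  rw [← zpow_natCast, ← zpow_mul, Nat.cast_ofNat, two_mul, zpow_add₀ hq]
  nth_rw 2 [h]
  exact mul_inv_cancel₀ (zpow_ne_zero _ hq)

theorem qint_ne_zero {N : ℕ} {k : ℤ} (hk1 : 1 ≤ k) (hkN : k ≤ (N : ℤ) - 1) : qint N k ≠ 0 := by
  have not_dvd {j : ℤ} (hj1 : 1 ≤ j) (hjN : j ≤ (N : ℤ) - 1) : ¬ (N : ℤ) ∣ j :=
    fun h ↦ by have := Int.le_of_dvd (by omega) h; omega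
  have hN : N ≠ 0 := by omega
  have h1 := qq_zpow_sub_zpow_neg_ne_zero hN (not_dvd le_rfl (by omega))
  rw [zpow_one, zpow_neg_one] at h1
  exact div_ne_zero (qq_zpow_sub_zpow_neg_ne_zero hN (not_dvd hk1 hkN)) h1

theorem two_div_qint_mul_qint {N : ℕ} {a b : ℤ} (ha : qint N a ≠ 0) (hb : qint N b ≠ 0)
    (hab : qint N (a + b) ≠ 0) :
    2 / (qint N a * qint N b) = (qint N (a + b))⁻¹ *
      ((qq N ^ a + qq N ^ (-a)) / qint N a + (qq N ^ b + qq N ^ (-b)) / qint N b) := by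
  have hq : qq N ≠ 0 := Complex.exp_ne_zero _
  have num_ne_zero {k : ℤ} (hk : qint N k ≠ 0) : qq N ^ k - (qq N ^ k)⁻¹ ≠ 0 :=
    fun h ↦ hk (by simp [qint, zpow_neg, h])
  have hab' := num_ne_zero hab
  rw [zpow_add₀ hq] at hab'
  have key := two_div_sub_inv_mul_sub_inv (num_ne_zero ha) (num_ne_zero hb) hab'
  simp only [qint, zpow_neg]
  rw [zpow_add₀ hq]
  generalize qq N ^ a = x, qq N ^ b = y, qq N - (qq N)⁻¹ = d at key ⊢
  rw [div_mul_div_comm, div_div_eq_mul_div, inv_div, div_div_eq_mul_div, div_div_eq_mul_div,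
    mul_div_right_comm, key]
  ring

theorem stmt1_general (N : ℕ) (s : ℤ) (hs1 : 1 ≤ s) (hs : s ≤ (N : ℤ) - 1) :
    ∑ l ∈ Finset.Icc 1 (s - 1), 1 / (qint N l * qint N (s - l)) =
      (qint N s)⁻¹ * ∑ l ∈ Finset.Icc 1 (s - 1), (qq N ^ l + qq N ^ (-l)) / qint N l := by
  set f : ℤ → ℂ := fun l ↦ (qq N ^ l + qq N ^ (-l)) / qint N l
  have term_eq : ∀ l ∈ Icc 1 (s - 1),
      1 / (qint N l * qint N (s - l)) = (qint N s)⁻¹ * (f l + f (s - l)) / 2 := by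
    intro l hl
    rw [mem_Icc] at hl
    have h := two_div_qint_mul_qint (qint_ne_zero hl.1 (by omega))
      (qint_ne_zero (by omega) (by omega) : qint N (s - l) ≠ 0)
      (by rw [add_sub_cancel]; exact qint_ne_zero hs1 hs)
    rw [add_sub_cancel] at h
    rw [eq_div_iff two_ne_zero, ← h]
    ring
  calc ∑ l ∈ Icc 1 (s - 1), 1 / (qint N l * qint N (s - l))
      = (qint N s)⁻¹ * (∑ l ∈ Icc 1 (s - 1), f l + ∑ l ∈ Icc 1 (s - 1), f (s - l)) / 2 := by
        rw [sum_congr rfl term_eq, ← sum_div, ← mul_sum, sum_add_distrib]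
    _ = (qint N s)⁻¹ * ∑ l ∈ Icc 1 (s - 1), f l := by
        rw [sum_Icc_reflect f (by ring)]
        ring

theorem stmt1 (N : ℕ) (hN : 2 ≤ N) (s : ℤ) (hs1 : 1 ≤ s) (hs : s ≤ (N : ℤ) - 1) :
    ∑ l ∈ Finset.Icc 1 (s - 1), 1 / (qint N l * qint N (s - l)) =
      (qint N s)⁻¹ * ∑ l ∈ Finset.Icc 1 (s - 1), (qq N ^ l + qq N ^ (-l)) / qint N l :=
  stmt1_general N s hs1 hs
end

section
/- Let N ≥ 2 be an integer and q = exp(πi/N). For every integer s with 1 ≤ s ≤ N−1, −[s]²·( ∑_{l=1}^{s−1} 1/([l]·[s−l]) − ∑_{l=1}^{N−s−1} 1/([l]·[N−s−l]) ) = q^s + q^{−s}. -/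
/-!
Write `{k} = q^k - q^{-k}`, `{k}₊ = q^k + q^{-k}` and `g k = {k}₊ / {k}`. The identity
`2 {a + b} = (g a + g b) {a} {b}` turns `∑_{l=1}^{t-1} 1 / ({l} {t-l})` into
`(∑_{l=1}^{t-1} g l) / {t}`, by pairing `l` with `t - l`. Since `q^N = -1`, we have
`{N - k} = {k}` and `g (N - k) = -g k`; hence `∑_{l=1}^{N-1} g l = 0` and
`∑_{l=1}^{N-s-1} g l = ∑_{l=1}^{s} g l`. The difference of the two sums is therefore
`-g s / {s}`, and multiplying by `-[s]² = -{s}² / {1}²` (the `{1}²` cancels against the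
`{1}²` in each `1 / ([l] [t-l])`) leaves `{s}₊`.
-/

open Complex Finset

theorem Finset.sum_Icc_const_sub {M : Type*} [AddCommMonoid M] (f : ℤ → M) (a b t : ℤ) :
    ∑ l ∈ Icc a b, f (t - l) = ∑ l ∈ Icc (t - b) (t - a), f l := by
  refine sum_nbij' (t - ·) (t - ·) (fun l hl => ?_) (fun l hl => ?_)
    (fun l _ => sub_sub_cancel t l) (fun l _ => sub_sub_cancel t l) (fun l _ => rfl)
  all_goals
    simp only [mem_Icc] at hl ⊢
    omega

theorem Finset.sum_Icc_add_sum_Icc {M : Type*} [AddCommMonoid M] (f : ℤ → M) {a b c : ℤ}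
    (hab : a ≤ b + 1) (hbc : b ≤ c) :
    ∑ l ∈ Icc a b, f l + ∑ l ∈ Icc (b + 1) c, f l = ∑ l ∈ Icc a c, f l := by
  rw [← sum_union (disjoint_left.2 fun l h h' => by simp only [mem_Icc] at h h'; omega)]
  congr 1
  ext l
  simp only [mem_union, mem_Icc]
  omega

section QBrace

variable {K : Type*} [Field K]

def qBrace (q : K) (k : ℤ) : K := q ^ k - q ^ (-k)

def qBracePlus (q : K) (k : ℤ) : K := q ^ k + q ^ (-k)

/-- For `q = exp (π i / N)` this is `-i cot (π k / N)`. -/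
def qCot (q : K) (k : ℤ) : K := qBracePlus q k / qBrace q k

variable {q : K}

theorem two_mul_qBrace_add {a b : ℤ} (hq : q ≠ 0) (ha : qBrace q a ≠ 0) (hb : qBrace q b ≠ 0) :
    2 * qBrace q (a + b) = (qCot q a + qCot q b) * (qBrace q a * qBrace q b) := by
  unfold qCot qBracePlus at *
  field_simp
  unfold qBrace at *
  rw [zpow_add₀ hq, neg_add, zpow_add₀ hq]
  ring

theorem sum_one_div_qBrace_mul (hq : q ≠ 0) (h2 : (2 : K) ≠ 0) {t : ℤ} (ht : 1 ≤ t)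
    (hB : ∀ k ∈ Icc 1 t, qBrace q k ≠ 0) :
    ∑ l ∈ Icc 1 (t - 1), 1 / (qBrace q l * qBrace q (t - l)) =
      (∑ l ∈ Icc 1 (t - 1), qCot q l) / qBrace q t := by
  have hBt : qBrace q t ≠ 0 := hB t (right_mem_Icc.2 ht)
  have hterm : ∀ l ∈ Icc 1 (t - 1),
      1 / (qBrace q l * qBrace q (t - l)) = (qCot q l + qCot q (t - l)) / (2 * qBrace q t) := by
    intro l hl
    simp only [mem_Icc] at hl
    have hBl := hB l (mem_Icc.2 ⟨hl.1, by omega⟩)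
    have hBtl := hB (t - l) (mem_Icc.2 ⟨by omega, by omega⟩)
    have key := two_mul_qBrace_add hq hBl hBtl
    rw [add_sub_cancel] at key
    rw [eq_div_iff (mul_ne_zero h2 hBt), key]
    field_simp
  rw [sum_congr rfl hterm, ← sum_div, sum_add_distrib, sum_Icc_const_sub, sub_sub_cancel]
  field_simp
  ring

section Antiperiodic

variable {N : ℤ} (hq : q ≠ 0) (hqN : q ^ N = -1)
include hq hqN

theorem qBrace_sub_left (k : ℤ) : qBrace q (N - k) = qBrace q k := by
  simp only [qBrace, neg_sub, zpow_sub₀ hq, zpow_neg, hqN]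
  ring

theorem qCot_sub_left (k : ℤ) : qCot q (N - k) = -qCot q k := by
  simp only [qCot, qBrace_sub_left hq hqN, qBracePlus, neg_sub, zpow_sub₀ hq, zpow_neg, hqN]
  ring

theorem sum_qCot_Icc_eq_zero (h2 : (2 : K) ≠ 0) : ∑ l ∈ Icc 1 (N - 1), qCot q l = 0 := by
  have hrefl := sum_Icc_const_sub (qCot q) 1 (N - 1) N
  simp only [qCot_sub_left hq hqN, sum_neg_distrib, sub_sub_cancel] at hrefl
  exact mul_left_cancel₀ h2 (by linear_combination -hrefl)

theorem sum_qCot_Icc_sub_sub_one (h2 : (2 : K) ≠ 0) {s : ℤ} (hs0 : 0 ≤ s) (hsN : s ≤ N - 1) :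
    ∑ l ∈ Icc 1 (N - s - 1), qCot q l = ∑ l ∈ Icc 1 s, qCot q l := by
  have hsplit := sum_Icc_add_sum_Icc (qCot q) (a := 1) (b := N - s - 1) (c := N - 1)
    (by omega) (by omega)
  have hrefl := sum_Icc_const_sub (qCot q) 1 s N
  simp only [qCot_sub_left hq hqN, sum_neg_distrib] at hrefl
  rw [sum_qCot_Icc_eq_zero hq hqN h2, show N - s - 1 + 1 = N - s by ring, ← hrefl] at hsplit
  linear_combination hsplit

end Antiperiodic

end QBrace

namespace IsPrimitiveRoot

variable {K : Type*} [Field K] {q : K} {N : ℕ}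

theorem zpow_eq_neg_one_of_two_mul (hq : IsPrimitiveRoot q (2 * N)) (hN : N ≠ 0) :
    q ^ (N : ℤ) = -1 := by
  have h := hq.pow_of_dvd hN (dvd_mul_left N 2)
  rw [Nat.mul_div_cancel _ (Nat.pos_of_ne_zero hN)] at h
  rw [zpow_natCast, h.eq_neg_one_of_two_right]

theorem qBrace_ne_zero (hq : IsPrimitiveRoot q (2 * N)) {k : ℤ} (hk1 : 1 ≤ k)
    (hkN : k ≤ N - 1) : qBrace q k ≠ 0 := by
  intro h
  have hq0 := hq.ne_zero (by omega)
  have h2k : q ^ (2 * k) = 1 := by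
    rw [two_mul, zpow_add₀ hq0]
    nth_rw 2 [sub_eq_zero.mp h]
    rw [← zpow_add₀ hq0, add_neg_cancel, zpow_zero]
  rw [hq.zpow_eq_one_iff_dvd] at h2k
  push_cast at h2k
  have := Int.le_of_dvd (by omega) (Int.dvd_of_mul_dvd_mul_left two_ne_zero h2k)
  omega

theorem sum_one_div_qBrace_mul_sub_sum (hq : IsPrimitiveRoot q (2 * N)) {s : ℤ} (hs1 : 1 ≤ s)
    (hs : s ≤ N - 1) :
    ∑ l ∈ Icc 1 (s - 1), 1 / (qBrace q l * qBrace q (s - l)) -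
        ∑ l ∈ Icc 1 ((N : ℤ) - s - 1), 1 / (qBrace q l * qBrace q ((N : ℤ) - s - l)) =
      -qCot q s / qBrace q s := by
  have hN : N ≠ 0 := by omega
  have hq0 : q ≠ 0 := hq.ne_zero (by omega)
  have hqN := hq.zpow_eq_neg_one_of_two_mul hN
  have h2 : (2 : K) ≠ 0 := fun h2 =>
    hq.pow_ne_one_of_pos_of_lt hN (by omega)
      (by rw [← zpow_natCast, hqN]; linear_combination -h2)
  have hB : ∀ t ≤ (N : ℤ) - 1, ∀ k ∈ Icc 1 t, qBrace q k ≠ 0 := fun t ht k hk => by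
    simp only [mem_Icc] at hk
    exact hq.qBrace_ne_zero hk.1 (by omega)
  have hCs : ∑ l ∈ Icc 1 s, qCot q l = ∑ l ∈ Icc 1 (s - 1), qCot q l + qCot q s := by
    rw [← sum_Icc_add_sum_Icc _ (by omega) (by omega : s - 1 ≤ s), sub_add_cancel, Icc_self,
      sum_singleton]
  rw [sum_one_div_qBrace_mul hq0 h2 hs1 (hB s hs), sum_one_div_qBrace_mul hq0 h2 (by omega)
    (hB _ (by omega)), qBrace_sub_left hq0 hqN,
    sum_qCot_Icc_sub_sub_one hq0 hqN h2 (by omega) (by omega), hCs]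
  ring

end IsPrimitiveRoot

theorem qq_isPrimitiveRoot {N : ℕ} (hN : N ≠ 0) : IsPrimitiveRoot (qq N) (2 * N) := by
  convert Complex.isPrimitiveRoot_exp (2 * N) (by omega) using 2
  unfold qq
  push_cast
  field_simp

theorem qint_eq_qBrace_div (N : ℕ) (k : ℤ) :
    qint N k = qBrace (qq N) k / qBrace (qq N) 1 := by
  simp [qint, qBrace]

theorem one_div_div_mul_div {K : Type*} [Field K] (x y c : K) :
    1 / (x / c * (y / c)) = c ^ 2 * (1 / (x * y)) := by
  rw [div_mul_div_comm, one_div_div]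
  ring

theorem stmt5_general (N : ℕ) (s : ℤ) (hs1 : 1 ≤ s) (hs : s ≤ (N : ℤ) - 1) :
    -(qint N s) ^ 2 *
      ((∑ l ∈ Finset.Icc 1 (s - 1), 1 / (qint N l * qint N (s - l))) -
        ∑ l ∈ Finset.Icc 1 ((N : ℤ) - s - 1), 1 / (qint N l * qint N ((N : ℤ) - s - l))) =
      qq N ^ s + qq N ^ (-s) := by
  have hq := qq_isPrimitiveRoot (N := N) (by omega)
  have hB1 : qBrace (qq N) 1 ≠ 0 := hq.qBrace_ne_zero le_rfl (by omega)
  have hBs : qBrace (qq N) s ≠ 0 := hq.qBrace_ne_zero hs1 hs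
  simp only [qint_eq_qBrace_div, one_div_div_mul_div, ← mul_sum, ← mul_sub,
    hq.sum_one_div_qBrace_mul_sub_sum hs1 hs, qCot, qBracePlus]
  field_simp

theorem stmt5 (N : ℕ) (hN : 2 ≤ N) (s : ℤ) (hs1 : 1 ≤ s) (hs : s ≤ (N : ℤ) - 1) :
    -(qint N s) ^ 2 *
      ((∑ l ∈ Finset.Icc 1 (s - 1), 1 / (qint N l * qint N (s - l))) -
        ∑ l ∈ Finset.Icc 1 ((N : ℤ) - s - 1), 1 / (qint N l * qint N ((N : ℤ) - s - l))) =
      qq N ^ s + qq N ^ (-s) :=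
  stmt5_general N s hs1 hs
end

section
/- Let N ≥ 2 be an integer and t = exp(πi/(2N)). Then | ∑_{s=1}^{N−1} (−1)^s · (t^{2s} − t^{−2s})² · t^{s²} | = 2√(2N)·sin(π/N). In particular this alternating theta-type sum is nonzero. -/
open Complex Finset
open scoped Real ComplexConjugate

/-!
With `ζ = t` a primitive `4N`-th root of unity, `(-1)^s = ζ^(2Ns)`, and completing the square
rewrites each term as `ζ^(-N²) (ζ^(-4) θ(s+N+2) - 2 θ(s+N) + ζ^(-4) θ(s+N-2))`, where
`θ(x) = ζ^(x²)` is `2N`-periodic. The term itself is even, `2N`-periodic and vanishes at `s = 0`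
and `s = N`, so twice the sum is its sum over a full period, namely `2 ζ^(-N²) (ζ^(-4) - 1) G`
with `G = ∑_{j<2N} ζ^(j²)`. Finally `|G|² = 2N` (expanding `G·Ḡ`, all geometric series but one
vanish) and `|ζ^(-4) - 1| = 2 sin(π/N)`.
-/

theorem Function.Periodic.sum_range_add_nat {M : Type*} [AddCancelCommMonoid M] {f : ℤ → M}
    {n : ℕ} (hf : Function.Periodic f n) (k : ℕ) :
    ∑ j ∈ range n, f (j + k) = ∑ j ∈ range n, f j := by
  induction k with
  | zero => simp
  | succ k ih =>
    rw [← ih]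
    have hwrap : f ((n : ℤ) + k) = f ((0 : ℕ) + k) := by simpa [add_comm] using hf k
    have h := (sum_range_succ' (fun j : ℕ => f (j + k)) n).symm.trans
      (sum_range_succ (fun j : ℕ => f (j + k)) n)
    rw [hwrap] at h
    convert add_right_cancel h using 3 with j
    push_cast
    ring

theorem Function.Periodic.sum_range_add {M : Type*} [AddCancelCommMonoid M] {f : ℤ → M}
    {n : ℕ} (hf : Function.Periodic f n) (k : ℤ) :
    ∑ j ∈ range n, f (j + k) = ∑ j ∈ range n, f j := by
  obtain ⟨m, rfl | rfl⟩ := Int.eq_nat_or_neg k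
  · exact hf.sum_range_add_nat m
  · have hg : Function.Periodic (fun x => f (x - m)) n := fun x => by
      simpa only [sub_add_eq_add_sub] using hf (x - m)
    simpa only [add_sub_cancel_right, ← sub_eq_add_neg] using (hg.sum_range_add_nat m).symm

theorem sum_range_two_mul_eq_two_nsmul_sum_Icc {M : Type*} [AddCommMonoid M] {f : ℤ → M}
    {N : ℕ} (hN : N ≠ 0) (h₀ : f 0 = 0) (hN₀ : f N = 0) (hf : ∀ s, f (2 * N - s) = f s) :
    ∑ s ∈ range (2 * N), f s = 2 • ∑ s ∈ Icc 1 (N - 1), f s := by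
  have hIcc : Icc 1 (N - 1) = Ico 1 N := by ext; simp only [mem_Icc, mem_Ico]; omega
  have hlow : ∑ s ∈ Ico 0 (N + 1), f s = ∑ s ∈ Ico 1 N, f s := by
    rw [sum_Ico_succ_top (Nat.zero_le N), sum_eq_sum_Ico_succ_bot (by omega)]
    simp [h₀, hN₀]
  have hhigh : ∑ s ∈ Ico (N + 1) (2 * N), f s = ∑ s ∈ Ico 1 N, f s := by
    refine sum_nbij' (fun s => 2 * N - s) (fun s => 2 * N - s) ?_ ?_ ?_ ?_ ?_ <;>
      intro s hs <;> simp only [mem_Ico] at hs ⊢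
    any_goals omega
    rw [← hf, Nat.cast_sub (by omega), Nat.cast_mul, Nat.cast_ofNat]
  rw [range_eq_Ico, ← sum_Ico_consecutive _ (Nat.zero_le _) (by omega : N + 1 ≤ 2 * N), hlow,
    hhigh, hIcc, two_nsmul]

section

variable {K : Type*} [DivisionRing K]

/-- Half of the quadratic Gauss sum `g_{4N} = ∑_{j<4N} t^(j²)` of the paper, for `n = 2N`. -/
def thetaSum (ζ : K) (n : ℕ) : K :=
  ∑ j ∈ range n, ζ ^ ((j : ℤ) ^ 2)

def altThetaTerm (ζ : K) (s : ℤ) : K :=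
  (-1) ^ s * (ζ ^ (2 * s) - ζ ^ (-(2 * s))) ^ 2 * ζ ^ (s ^ 2)

theorem altThetaTerm_natCast (ζ : K) (s : ℕ) :
    altThetaTerm ζ s = (-1) ^ s * (ζ ^ (2 * (s : ℤ)) - ζ ^ (-(2 * (s : ℤ)))) ^ 2 * ζ ^ (s ^ 2) := by
  rw [altThetaTerm, zpow_natCast, ← Nat.cast_pow, zpow_natCast]

theorem altThetaTerm_neg (ζ : K) (s : ℤ) :
    altThetaTerm ζ (-s) = altThetaTerm ζ s := by
  have hsign : ((-1 : K) ^ s)⁻¹ = (-1) ^ s := by rw [← inv_zpow, inv_neg_one]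
  simp only [altThetaTerm, zpow_neg, hsign, mul_neg, neg_sq, neg_neg]
  rw [← neg_sub, neg_sq]

end

namespace IsPrimitiveRoot

variable {K : Type*} [Field K] {ζ : K} {N : ℕ}

theorem zpow_eq_zpow_of_eq_add_mul {n : ℕ} (hζ : IsPrimitiveRoot ζ n) (hn : n ≠ 0) {a b : ℤ}
    (c : ℤ) (h : a = b + n * c) : ζ ^ a = ζ ^ b := by
  rw [h, zpow_add₀ (hζ.ne_zero hn), zpow_mul, hζ.zpow_eq_one, one_zpow, mul_one]

theorem geom_sum_pow_eq_ite {n j : ℕ} (hζ : IsPrimitiveRoot ζ n) (hj : j < n) :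
    ∑ k ∈ range n, (ζ ^ j) ^ k = if j = 0 then (n : K) else 0 := by
  split_ifs with hj0
  · simp [hj0]
  · have hne : ζ ^ j ≠ 1 := hζ.pow_ne_one_of_pos_of_lt hj0 hj
    have hpow : (ζ ^ j) ^ n = 1 := by rw [← pow_mul, mul_comm, pow_mul, hζ.pow_eq_one, one_pow]
    rw [geom_sum_eq hne, hpow, sub_self, zero_div]

theorem pow_two_mul_eq_neg_one (hζ : IsPrimitiveRoot ζ (4 * N)) (hN : N ≠ 0) :
    ζ ^ (2 * N) = -1 := by
  have h := hζ.pow_of_dvd (p := 2 * N) (by omega) ⟨2, by ring⟩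
  rw [Nat.div_eq_of_eq_mul_left (k := 2) (by omega) (by ring)] at h
  exact h.eq_neg_one_of_two_right

theorem neg_one_zpow_eq_zpow (hζ : IsPrimitiveRoot ζ (4 * N)) (hN : N ≠ 0) (s : ℤ) :
    (-1 : K) ^ s = ζ ^ (2 * N * s) := by
  rw [zpow_mul, ← hζ.pow_two_mul_eq_neg_one hN]
  norm_cast

theorem zpow_sq_periodic (hζ : IsPrimitiveRoot ζ (4 * N)) (hN : N ≠ 0) :
    Function.Periodic (fun x : ℤ => ζ ^ x ^ 2) (2 * N : ℕ) := fun x =>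
  hζ.zpow_eq_zpow_of_eq_add_mul (by omega) (x + N) (by push_cast; ring)

theorem thetaSum_mul_thetaSum_inv (hζ : IsPrimitiveRoot ζ (4 * N)) (hN : N ≠ 0) :
    thetaSum ζ (2 * N) * thetaSum ζ⁻¹ (2 * N) = 2 * N := by
  have hζ0 : ζ ≠ 0 := hζ.ne_zero (by omega)
  have hη : IsPrimitiveRoot (ζ ^ 2) (2 * N) := hζ.pow (by omega) (by ring)
  have hrow (k : ℕ) : thetaSum ζ (2 * N) * ζ⁻¹ ^ ((k : ℤ) ^ 2)
      = ∑ j ∈ range (2 * N), ζ ^ ((j : ℤ) ^ 2) * ((ζ ^ 2) ^ j) ^ k := by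
    rw [thetaSum, ← (hζ.zpow_sq_periodic hN).sum_range_add k, sum_mul]
    refine sum_congr rfl fun j _ => ?_
    rw [inv_zpow', ← zpow_add₀ hζ0, ← pow_mul, ← pow_mul, ← zpow_natCast, ← zpow_add₀ hζ0]
    congr 1
    push_cast
    ring
  calc thetaSum ζ (2 * N) * thetaSum ζ⁻¹ (2 * N)
      = ∑ j ∈ range (2 * N), ζ ^ ((j : ℤ) ^ 2) * ∑ k ∈ range (2 * N), ((ζ ^ 2) ^ j) ^ k := by
        rw [thetaSum.eq_1 ζ⁻¹, mul_sum, sum_congr rfl fun k _ => hrow k, sum_comm]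
        simp only [mul_sum]
    _ = ∑ j ∈ range (2 * N), if j = 0 then (2 * N : K) else 0 := by
        refine sum_congr rfl fun j hj => ?_
        rw [hη.geom_sum_pow_eq_ite (mem_range.1 hj)]
        split_ifs with h0 <;> simp [h0]
    _ = 2 * N := by
        rw [sum_ite_eq' _ 0, if_pos (mem_range.2 (by omega))]

theorem altThetaTerm_periodic (hζ : IsPrimitiveRoot ζ (4 * N)) (hN : N ≠ 0) :
    Function.Periodic (altThetaTerm ζ) (2 * N : ℕ) := fun s => by
  have h4N : 4 * N ≠ 0 := by omega
  rw [altThetaTerm, altThetaTerm, hζ.neg_one_zpow_eq_zpow hN, hζ.neg_one_zpow_eq_zpow hN,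
    hζ.zpow_eq_zpow_of_eq_add_mul h4N (a := 2 * N * (s + (2 * N : ℕ))) (b := 2 * N * s) N
      (by push_cast; ring),
    hζ.zpow_eq_zpow_of_eq_add_mul h4N (a := 2 * (s + (2 * N : ℕ))) (b := 2 * s) 1
      (by push_cast; ring),
    hζ.zpow_eq_zpow_of_eq_add_mul h4N (a := -(2 * (s + (2 * N : ℕ)))) (b := -(2 * s)) (-1)
      (by push_cast; ring),
    hζ.zpow_eq_zpow_of_eq_add_mul h4N (a := (s + (2 * N : ℕ)) ^ 2) (b := s ^ 2) (s + N)
      (by push_cast; ring)]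

theorem altThetaTerm_eq (hζ : IsPrimitiveRoot ζ (4 * N)) (hN : N ≠ 0) (s : ℤ) :
    altThetaTerm ζ s = ζ ^ (-(N : ℤ) ^ 2)
      * (ζ ^ (-4 : ℤ) * (ζ ^ ((s + N + 2) ^ 2) + ζ ^ ((s + N - 2) ^ 2)) - 2 * ζ ^ ((s + N) ^ 2)) := by
  have hζ0 : ζ ≠ 0 := hζ.ne_zero (by omega)
  have h4N : 4 * N ≠ 0 := by omega
  have hmul (a b : ℤ) : ζ ^ a * ζ ^ b = ζ ^ (a + b) := (zpow_add₀ hζ0 a b).symm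
  have hplus : ζ ^ (-(N : ℤ) ^ 2) * (ζ ^ (-4 : ℤ) * ζ ^ ((s + N + 2) ^ 2))
      = ζ ^ (2 * N * s) * ζ ^ (s ^ 2) * ζ ^ (2 * s) * ζ ^ (2 * s) := by
    simp only [hmul]
    exact hζ.zpow_eq_zpow_of_eq_add_mul h4N 1 (by push_cast; ring)
  have hminus : ζ ^ (-(N : ℤ) ^ 2) * (ζ ^ (-4 : ℤ) * ζ ^ ((s + N - 2) ^ 2))
      = ζ ^ (2 * N * s) * ζ ^ (s ^ 2) * ζ ^ (-(2 * s)) * ζ ^ (-(2 * s)) := by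
    simp only [hmul]
    exact hζ.zpow_eq_zpow_of_eq_add_mul h4N (-1) (by push_cast; ring)
  have hmid : ζ ^ (-(N : ℤ) ^ 2) * ζ ^ ((s + N) ^ 2)
      = ζ ^ (2 * N * s) * ζ ^ (s ^ 2) * ζ ^ (2 * s) * ζ ^ (-(2 * s)) := by
    simp only [hmul]
    ring_nf
  rw [altThetaTerm, hζ.neg_one_zpow_eq_zpow hN]
  linear_combination 2 * hmid - hplus - hminus

theorem sum_range_altThetaTerm (hζ : IsPrimitiveRoot ζ (4 * N)) (hN : N ≠ 0) :
    ∑ s ∈ range (2 * N), altThetaTerm ζ s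
      = 2 * (ζ ^ (-(N : ℤ) ^ 2) * (ζ ^ (-4 : ℤ) - 1) * thetaSum ζ (2 * N)) := by
  have hshift (k : ℤ) : ∑ s ∈ range (2 * N), ζ ^ (((s : ℤ) + k) ^ 2) = thetaSum ζ (2 * N) :=
    (hζ.zpow_sq_periodic hN).sum_range_add k
  simp only [hζ.altThetaTerm_eq hN, ← mul_sum, sum_sub_distrib, sum_add_distrib, add_assoc,
    add_sub_assoc, hshift]
  ring

theorem sum_Icc_altThetaTerm (hζ : IsPrimitiveRoot ζ (4 * N)) (hN : N ≠ 0) :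
    ∑ s ∈ Icc 1 (N - 1), altThetaTerm ζ s
      = ζ ^ (-(N : ℤ) ^ 2) * (ζ ^ (-4 : ℤ) - 1) * thetaSum ζ (2 * N) := by
  have htwo : (2 : K) ≠ 0 := fun h =>
    hζ.pow_ne_one_of_pos_of_lt (l := 2 * N) (by omega) (by omega)
      (by rw [hζ.pow_two_mul_eq_neg_one hN]; linear_combination -h)
  have hN₀ : altThetaTerm ζ N = 0 := by
    have h : ζ ^ (2 * (N : ℤ)) = -1 := by exact_mod_cast hζ.pow_two_mul_eq_neg_one hN
    simp [altThetaTerm, h]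
  have hsymm (s : ℤ) : altThetaTerm ζ (2 * N - s) = altThetaTerm ζ s := by
    rw [sub_eq_neg_add, show 2 * (N : ℤ) = (2 * N : ℕ) by push_cast; ring,
      hζ.altThetaTerm_periodic hN, altThetaTerm_neg]
  have h := sum_range_two_mul_eq_two_nsmul_sum_Icc hN (by simp [altThetaTerm]) hN₀ hsymm
  rw [hζ.sum_range_altThetaTerm hN, nsmul_eq_mul, Nat.cast_ofNat] at h
  exact (mul_left_cancel₀ htwo h).symm

theorem norm_thetaSum {ζ : ℂ} (hζ : IsPrimitiveRoot ζ (4 * N)) (hN : N ≠ 0) :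
    ‖thetaSum ζ (2 * N)‖ = √(2 * N) := by
  have hconj : conj (thetaSum ζ (2 * N)) = thetaSum ζ⁻¹ (2 * N) := by
    simp only [thetaSum, map_sum]
    refine sum_congr rfl fun j _ => ?_
    rw [map_zpow₀, ← Complex.inv_eq_conj (hζ.norm'_eq_one (by omega))]
  have h := hζ.thetaSum_mul_thetaSum_inv hN
  rw [← hconj, Complex.mul_conj'] at h
  have h' : ‖thetaSum ζ (2 * N)‖ ^ 2 = 2 * N := by exact_mod_cast h
  rw [← h', Real.sqrt_sq (norm_nonneg _)]

end IsPrimitiveRoot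

theorem Complex.isPrimitiveRoot_exp_pi_mul_I_div {N : ℕ} (hN : N ≠ 0) :
    IsPrimitiveRoot (exp (π * I / (2 * N))) (4 * N) := by
  convert Complex.isPrimitiveRoot_exp (4 * N) (by omega) using 2
  push_cast
  field_simp
  ring

theorem Real.sin_pi_div_pos {N : ℕ} (hN : 2 ≤ N) : 0 < Real.sin (π / N) :=
  Real.sin_pos_of_pos_of_lt_pi (by positivity)
    (div_lt_self Real.pi_pos (by exact_mod_cast hN))

theorem Complex.norm_exp_pi_mul_I_div_zpow_neg_four_sub_one {N : ℕ} (hN : 2 ≤ N) :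
    ‖exp (π * I / (2 * N)) ^ (-4 : ℤ) - 1‖ = 2 * Real.sin (π / N) := by
  rw [← Complex.exp_int_mul, show ((-4 : ℤ) : ℂ) * (π * I / (2 * N)) = I * (-(2 * π / N) : ℝ) by
      push_cast; field_simp; ring,
    Complex.norm_exp_I_mul_ofReal_sub_one, neg_div, Real.sin_neg, mul_div_assoc,
    mul_div_cancel_left₀ _ two_ne_zero, Real.norm_eq_abs, abs_of_neg]
  · ring
  · nlinarith [Real.sin_pi_div_pos hN]

theorem stmt10 (N : ℕ) (hN : 2 ≤ N) (t : ℂ)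
    (ht : t = Complex.exp (Real.pi * Complex.I / (2 * N))) :
    ‖(∑ s ∈ Finset.Icc 1 (N - 1),
        (-1 : ℂ) ^ s * (t ^ (2 * (s : ℤ)) - t ^ (-(2 * (s : ℤ)))) ^ 2 * t ^ (s ^ 2))‖ =
      2 * Real.sqrt (2 * N) * Real.sin (Real.pi / N) ∧
    (∑ s ∈ Finset.Icc 1 (N - 1),
        (-1 : ℂ) ^ s * (t ^ (2 * (s : ℤ)) - t ^ (-(2 * (s : ℤ)))) ^ 2 * t ^ (s ^ 2)) ≠ 0 := by
  subst ht
  have hN0 : N ≠ 0 := by omega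
  have hζ := Complex.isPrimitiveRoot_exp_pi_mul_I_div hN0
  have hpos : 0 < 2 * √(2 * N) * Real.sin (π / N) :=
    mul_pos (mul_pos two_pos (Real.sqrt_pos.2 (by positivity))) (Real.sin_pi_div_pos hN)
  refine (fun h => ⟨h, norm_ne_zero_iff.1 (h ▸ hpos.ne')⟩) ?_
  simp only [← altThetaTerm_natCast, hζ.sum_Icc_altThetaTerm hN0]
  rw [norm_mul, norm_mul, norm_zpow, hζ.norm'_eq_one (by omega), one_zpow, one_mul,
    Complex.norm_exp_pi_mul_I_div_zpow_neg_four_sub_one hN, hζ.norm_thetaSum hN0]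
  ring
end

section
/- Let N ≥ 3 be an odd integer and t = exp(πi/(2N)). Then | ∑_{s=0}^{(N−3)/2} (t^{2(2s+1)} − t^{−2(2s+1)})² · t^{(2s+1)²} | = 2√N·sin(π/N). In particular this sum is nonzero. -/
/-!
Write `m = 2s + 1`. The summand `(t^{2m} - t^{-2m})² t^{m²}` equals
`t⁻⁴ (t^{(m+2)²} + t^{(m-2)²}) - 2 t^{m²}`; as a function of `m` it is even, `2N`-periodic and
vanishes at `m = N` (as `t^{2N} = -1`), so twice the sum is its sum over all odd residues
modulo `2N`. The shifts `m ↦ m ± 2` permute those residues, which turns the full sum into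
`2 (t⁻⁴ - 1) G` with `G = ∑_{s<N} t^{(2s+1)²}`. Expanding `G Ḡ` and shifting the first factor,
the inner sums are geometric sums of powers of `t⁸`, a primitive `N`-th root of unity because
`N` is odd; so `|G|² = N`. Finally `|t⁻⁴ - 1| = |e^{-2πi/N} - 1| = 2 sin(π/N)`.
-/

open Complex Finset

section PeriodicSums

variable {M : Type*}

theorem Finset.sum_range_add_of_periodic [AddCancelCommMonoid M] {u : ℕ → M} {N : ℕ}
    (hu : Function.Periodic u N) (r : ℕ) :
    ∑ s ∈ range N, u (s + r) = ∑ s ∈ range N, u s := by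
  induction r with
  | zero => rfl
  | succ r ih =>
    rw [← ih]
    have hshift := (sum_range_succ' (fun s ↦ u (s + r)) N).symm.trans
      (sum_range_succ (fun s ↦ u (s + r)) N)
    rw [zero_add, add_comm N r, hu r] at hshift
    simpa only [add_right_comm _ 1 r, add_assoc] using add_right_cancel hshift

theorem Finset.sum_range_odd_add_of_periodic [AddCancelCommMonoid M] {h : ℤ → M} {N : ℕ}
    (hh : Function.Periodic h (2 * N)) (r : ℕ) :
    ∑ s ∈ range N, h (2 * ↑(s + r) + 1) = ∑ s ∈ range N, h (2 * s + 1) :=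
  sum_range_add_of_periodic (u := fun s : ℕ ↦ h (2 * s + 1))
    (fun s ↦ by simpa [mul_add, add_right_comm] using hh (2 * s + 1)) r

theorem Finset.sum_range_odd_eq_two_nsmul_add [AddCommMonoid M] {h : ℤ → M} {K : ℕ}
    (hper : Function.Periodic h (2 * (2 * K + 1))) (heven : Function.Even h) :
    ∑ s ∈ range (2 * K + 1), h (2 * s + 1) =
      2 • ∑ s ∈ range K, h (2 * s + 1) + h (2 * K + 1) := by
  have hreflect : ∀ s ∈ range K, h (2 * ↑(K + 1 + s) + 1) = h (2 * ↑(K - 1 - s) + 1) := by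
    intro s hs
    have hsK : s < K := mem_range.1 hs
    rw [← heven, ← hper]
    congr 1
    push_cast [Nat.cast_sub (by omega : s ≤ K - 1), Nat.cast_sub (by omega : 1 ≤ K)]
    ring
  rw [show 2 * K + 1 = (K + 1) + K by ring, sum_range_add, sum_range_succ, sum_congr rfl hreflect,
    sum_range_reflect (fun s ↦ h (2 * s + 1)) K, two_nsmul]
  abel

end PeriodicSums

theorem zpow_add_mul_of_pow_eq_one {G₀ : Type*} [GroupWithZero G₀] {t : G₀} {n : ℕ}
    (ht : t ^ n = 1) (a k : ℤ) : t ^ (a + n * k) = t ^ a := by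
  rcases eq_or_ne n 0 with rfl | hn
  · simp
  · have ht0 : t ≠ 0 := by rintro rfl; simp [zero_pow hn] at ht
    rw [zpow_add₀ ht0, zpow_mul, zpow_natCast, ht, one_zpow, mul_one]

section OddGaussSum

variable {K : Type*} [Field K]

-- half of the paper's `g̃_{4N}`: one term for each odd residue modulo `2N`
def oddGaussSum (N : ℕ) (t : K) : K := ∑ s ∈ range N, t ^ ((2 * (s : ℤ) + 1) ^ 2)

theorem zpow_sq_periodic {t : K} {N : ℕ} (ht : t ^ (4 * N) = 1) :
    Function.Periodic (fun m : ℤ ↦ t ^ (m ^ 2)) (2 * N) := fun m ↦ by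
  dsimp only
  rw [show (m + 2 * N) ^ 2 = m ^ 2 + ((4 * N : ℕ) : ℤ) * (m + N) by push_cast; ring]
  exact zpow_add_mul_of_pow_eq_one ht _ _

theorem zpow_two_mul_sub_sq_mul_zpow_sq {t : K} (ht : t ≠ 0) (m : ℤ) :
    (t ^ (2 * m) - t ^ (-(2 * m))) ^ 2 * t ^ (m ^ 2) =
      t ^ (-4 : ℤ) * (t ^ ((m + 2) ^ 2) + t ^ ((m - 2) ^ 2)) - 2 * t ^ (m ^ 2) := by
  have hexp : ∀ a b : ℤ, t ^ a * t ^ b = t ^ (a + b) := fun a b ↦ (zpow_add₀ ht a b).symm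
  have hplus : t ^ (2 * m) * t ^ (2 * m) * t ^ (m ^ 2) = t ^ (-4 : ℤ) * t ^ ((m + 2) ^ 2) := by
    rw [hexp, hexp, hexp]; ring_nf
  have hminus : t ^ (-(2 * m)) * t ^ (-(2 * m)) * t ^ (m ^ 2) =
      t ^ (-4 : ℤ) * t ^ ((m - 2) ^ 2) := by
    rw [hexp, hexp, hexp]; ring_nf
  have hinv : t ^ (2 * m) * t ^ (-(2 * m)) = 1 := by rw [hexp, add_neg_cancel, zpow_zero]
  linear_combination hplus + hminus - 2 * t ^ (m ^ 2) * hinv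

theorem sum_range_zpow_two_mul_sub_sq_mul_zpow_sq [CharZero K] {t : K} {n : ℕ}
    (ht : t ^ (4 * (2 * n + 1)) = 1) :
    ∑ s ∈ range n, (t ^ (2 * (2 * (s : ℤ) + 1)) - t ^ (-(2 * (2 * (s : ℤ) + 1)))) ^ 2 *
        t ^ ((2 * (s : ℤ) + 1) ^ 2) =
      (t ^ (-4 : ℤ) - 1) * oddGaussSum (2 * n + 1) t := by
  have ht0 : t ≠ 0 := by rintro rfl; simp at ht
  have hperiod (a k : ℤ) : t ^ (a + 4 * (2 * n + 1) * k) = t ^ a := by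
    exact_mod_cast zpow_add_mul_of_pow_eq_one ht a k
  set g : ℤ → K := fun m ↦ (t ^ (2 * m) - t ^ (-(2 * m))) ^ 2 * t ^ (m ^ 2)
  have hf := zpow_sq_periodic ht
  have hg_periodic : Function.Periodic g (2 * (2 * n + 1)) := fun m ↦ by
    have hsq : t ^ ((m + 2 * (2 * n + 1)) ^ 2) = t ^ (m ^ 2) := by exact_mod_cast hf m
    have hpos : t ^ (2 * (m + 2 * (2 * n + 1))) = t ^ (2 * m) := by
      rw [← hperiod (2 * m) 1]; ring_nf
    have hneg : t ^ (-(2 * (m + 2 * (2 * n + 1)))) = t ^ (-(2 * m)) := by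
      rw [← hperiod (-(2 * m)) (-1)]; ring_nf
    simp only [g, hsq, hpos, hneg]
  have hg_even : Function.Even g := fun m ↦ by
    simp only [g, neg_sq, mul_neg, neg_neg]
    ring
  have hg_middle : g (2 * n + 1) = 0 := by
    have hcancel : t ^ (2 * (2 * n + 1 : ℤ)) = t ^ (-(2 * (2 * n + 1 : ℤ))) := by
      rw [← hperiod (-(2 * (2 * n + 1))) 1]; ring_nf
    simp only [g, hcancel, sub_self]
    ring
  have hup : ∑ s ∈ range (2 * n + 1), t ^ ((2 * (s : ℤ) + 1 + 2) ^ 2) =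
      oddGaussSum (2 * n + 1) t := by
    rw [oddGaussSum, ← sum_range_odd_add_of_periodic hf 1]
    refine sum_congr rfl fun s _ ↦ ?_
    push_cast; ring_nf
  have hdown : ∑ s ∈ range (2 * n + 1), t ^ ((2 * (s : ℤ) + 1 - 2) ^ 2) =
      oddGaussSum (2 * n + 1) t := by
    rw [← sum_range_odd_add_of_periodic (hf.sub_const 2) 1, oddGaussSum]
    refine sum_congr rfl fun s _ ↦ ?_
    push_cast; ring_nf
  have hfull : ∑ s ∈ range (2 * n + 1), g (2 * s + 1) =
      2 * ((t ^ (-4 : ℤ) - 1) * oddGaussSum (2 * n + 1) t) := by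
    simp only [g, zpow_two_mul_sub_sq_mul_zpow_sq ht0, sum_sub_distrib, ← mul_sum,
      sum_add_distrib, hup, hdown, oddGaussSum]
    ring
  rw [sum_range_odd_eq_two_nsmul_add hg_periodic hg_even, hg_middle, add_zero, two_nsmul,
    ← two_mul] at hfull
  exact mul_left_cancel₀ two_ne_zero hfull

theorem oddGaussSum_mul_oddGaussSum_inv {N : ℕ} {t : K} (hN : Odd N)
    (ht : IsPrimitiveRoot t (4 * N)) : oddGaussSum N t * oddGaussSum N t⁻¹ = N := by
  have hN0 : 0 < N := hN.pos
  have ht0 : t ≠ 0 := ht.ne_zero (by omega)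
  have hω : IsPrimitiveRoot (t ^ 8) N := by
    rw [show 8 = 4 * 2 by rfl, pow_mul]
    exact (ht.pow (by omega) rfl).pow_of_coprime 2 (Nat.coprime_two_left.2 hN)
  -- `(2 (s + r) + 1) ^ 2 - (2 r + 1) ^ 2 = 4 s (s + 1) + 8 s r`
  have hrow (r : ℕ) : oddGaussSum N t * t⁻¹ ^ ((2 * (r : ℤ) + 1) ^ 2) =
      ∑ s ∈ range N, t ^ (4 * (s : ℤ) * (s + 1)) * ((t ^ 8) ^ s) ^ r := by
    rw [oddGaussSum, ← sum_range_odd_add_of_periodic (zpow_sq_periodic ht.pow_eq_one) r, sum_mul]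
    refine sum_congr rfl fun s _ ↦ ?_
    rw [← pow_mul, ← pow_mul]
    simp only [inv_zpow', ← zpow_natCast, ← zpow_add₀ ht0]
    congr 1
    push_cast
    ring
  have hgeom (s : ℕ) (hs : s ∈ range N) :
      ∑ r ∈ range N, ((t ^ 8) ^ s) ^ r = if s = 0 then (N : K) else 0 := by
    split_ifs with hs0
    · simp [hs0]
    · have hne : (t ^ 8) ^ s ≠ 1 := hω.pow_ne_one_of_pos_of_lt hs0 (mem_range.1 hs)
      rw [geom_sum_eq hne, ← pow_mul, mul_comm, pow_mul, hω.pow_eq_one, one_pow, sub_self,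
        zero_div]
  calc oddGaussSum N t * oddGaussSum N t⁻¹
      = ∑ r ∈ range N, oddGaussSum N t * t⁻¹ ^ ((2 * (r : ℤ) + 1) ^ 2) := mul_sum _ _ _
    _ = ∑ s ∈ range N, t ^ (4 * (s : ℤ) * (s + 1)) * ∑ r ∈ range N, ((t ^ 8) ^ s) ^ r := by
      simp only [hrow, mul_sum]
      exact sum_comm
    _ = N := by
      rw [sum_congr rfl fun s hs ↦ by rw [hgeom s hs]]
      simp [hN0]

end OddGaussSum

open ComplexConjugate in
theorem Complex.norm_oddGaussSum {N : ℕ} {t : ℂ} (hN : Odd N) (ht : IsPrimitiveRoot t (4 * N)) :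
    ‖oddGaussSum N t‖ = √N := by
  have hnorm : ‖t‖ = 1 := ht.norm'_eq_one (by have := hN.pos; omega)
  have hconj : conj (oddGaussSum N t) = oddGaussSum N t⁻¹ := by
    simp only [oddGaussSum, map_sum, map_zpow₀, ← inv_eq_conj hnorm]
  have hnormSq : normSq (oddGaussSum N t) = N := by
    have h : (normSq (oddGaussSum N t) : ℂ) = N := by
      rw [← mul_conj, hconj, oddGaussSum_mul_oddGaussSum_inv hN ht]
    exact_mod_cast h
  rw [norm_def, hnormSq]

theorem Complex.norm_exp_zpow_neg_four_sub_one (N : ℕ) :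
    ‖exp (Real.pi * I / (2 * N)) ^ (-4 : ℤ) - 1‖ = 2 * Real.sin (Real.pi / N) := by
  have hexp : exp (Real.pi * I / (2 * N)) ^ (-4 : ℤ) = exp (I * ↑(-2 * Real.pi / N)) := by
    rw [← exp_int_mul]
    push_cast
    ring_nf
  have hsin : 0 ≤ Real.sin (Real.pi / N) := by
    refine Real.sin_nonneg_of_nonneg_of_le_pi (by positivity) ?_
    rcases N.eq_zero_or_pos with rfl | hN
    · simp [Real.pi_pos.le]
    · exact div_le_self Real.pi_pos.le (by exact_mod_cast hN)
  rw [hexp, norm_exp_I_mul_ofReal_sub_one, show -2 * Real.pi / N / 2 = -(Real.pi / N) by ring,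
    Real.sin_neg, norm_mul, Real.norm_two, norm_neg, Real.norm_of_nonneg hsin]

theorem stmt11 (N : ℕ) (hN : 3 ≤ N) (hodd : Odd N) (t : ℂ)
    (ht : t = Complex.exp (Real.pi * Complex.I / (2 * N))) :
    ‖(∑ s ∈ Finset.range ((N - 3) / 2 + 1),
        (t ^ (2 * (2 * (s : ℤ) + 1)) - t ^ (-(2 * (2 * (s : ℤ) + 1)))) ^ 2 *
          t ^ ((2 * s + 1) ^ 2))‖ =
      2 * Real.sqrt N * Real.sin (Real.pi / N) ∧
    (∑ s ∈ Finset.range ((N - 3) / 2 + 1),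
        (t ^ (2 * (2 * (s : ℤ) + 1)) - t ^ (-(2 * (2 * (s : ℤ) + 1)))) ^ 2 *
          t ^ ((2 * s + 1) ^ 2)) ≠ 0 := by
  have hprim : IsPrimitiveRoot t (4 * N) := by
    rw [ht]
    convert isPrimitiveRoot_exp (4 * N) (by omega) using 2
    push_cast
    ring
  have hsum : ∑ s ∈ range ((N - 3) / 2 + 1),
      (t ^ (2 * (2 * (s : ℤ) + 1)) - t ^ (-(2 * (2 * (s : ℤ) + 1)))) ^ 2 * t ^ ((2 * s + 1) ^ 2) =
        (t ^ (-4 : ℤ) - 1) * oddGaussSum N t := by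
    obtain ⟨n, rfl⟩ := hodd
    rw [show (2 * n + 1 - 3) / 2 + 1 = n by omega,
      ← sum_range_zpow_two_mul_sub_sq_mul_zpow_sq hprim.pow_eq_one]
    simp only [← zpow_natCast]
    push_cast
    rfl
  have hnorm : ‖(t ^ (-4 : ℤ) - 1) * oddGaussSum N t‖ = 2 * √N * Real.sin (Real.pi / N) := by
    rw [norm_mul, ht, Complex.norm_exp_zpow_neg_four_sub_one, ← ht,
      Complex.norm_oddGaussSum hodd hprim]
    ring
  have hpos : 0 < 2 * √N * Real.sin (Real.pi / N) := by
    have : 0 < Real.sin (Real.pi / N) := Real.sin_pos_of_pos_of_lt_pi (by positivity)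
      (div_lt_self Real.pi_pos (by exact_mod_cast (by omega : 1 < N)))
    positivity
  rw [hsum]
  exact ⟨hnorm, fun h ↦ by rw [h, norm_zero] at hnorm; linarith⟩
end
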